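/- arXiv:2212.03797 — 3 statements merged into one kernel-verified Lean document; each statement's English description precedes it below -/
import Mathlib

section
/- Let E be a real Banach space, k ∈ ℕ, and η, ξ ∈ L_k(Ω;E). Then the injective k-th moments satisfy ‖M^k_ε[η] − M^k_ε[ξ]‖_ε ≤ ‖η − ξ‖_{L_k(Ω;E)} · Σ_{i=0}^{k−1} ‖η‖_{L_k(Ω;E)}^i ‖ξ‖_{L_k(Ω;E)}^{k−i−1}. -/
open MeasureTheory BigOperators
open scoped TensorProduct

variable {E : Type*} [NormedAddCommGroup E] [NormedSpace ℝ E]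

noncomputable def tpair {k : ℕ} (f : Fin k → (E →L[ℝ] ℝ)) :
    (⨂[ℝ] _ : Fin k, E) →ₗ[ℝ] ℝ :=
  PiTensorProduct.lift
    ((MultilinearMap.mkPiAlgebra ℝ (Fin k) ℝ).compLinearMap fun i => (f i).toLinearMap)

/-- injective tensor norm on the k-fold algebraic tensor product -/
noncomputable def injNorm {k : ℕ} (U : ⨂[ℝ] _ : Fin k, E) : ℝ :=
  sSup {r | ∃ f : Fin k → (E →L[ℝ] ℝ), (∀ i, ‖f i‖ ≤ 1) ∧ r = |tpair f U|}

open scoped ENNReal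

/-! Pairing `M^k_ε[η] − M^k_ε[ξ]` with `f₁ ⊗ ⋯ ⊗ f_k`, `‖fᵢ‖ ≤ 1`, gives
`E[∏ fᵢ(η) − ∏ fᵢ(ξ)]`. Telescoping the products bounds the integrand pointwise by
`∑ⱼ ‖η − ξ‖ ‖η‖^j ‖ξ‖^(k-j-1)`, and Hölder's inequality with exponents `k, k/j, k/(k-j-1)`
bounds the expectation of the `j`-th term by `‖η − ξ‖_k ‖η‖_k^j ‖ξ‖_k^(k-j-1)`. -/

theorem norm_prod_le_pow {R : Type*} [NormedCommRing R] [NormOneClass R] {k : ℕ} {a : Fin k → R}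
    {X : ℝ} (ha : ∀ i, ‖a i‖ ≤ X) : ‖∏ i, a i‖ ≤ X ^ k :=
  calc ‖∏ i, a i‖ ≤ ∏ i, ‖a i‖ := Finset.norm_prod_le _ _
    _ ≤ ∏ _i : Fin k, X := Finset.prod_le_prod (fun _ _ => norm_nonneg _) fun i _ => ha i
    _ = X ^ k := by simp

theorem norm_prod_sub_prod_le {R : Type*} [NormedCommRing R] [NormOneClass R] {k : ℕ}
    {a b : Fin k → R} {X Y D : ℝ} (ha : ∀ i, ‖a i‖ ≤ X) (hb : ∀ i, ‖b i‖ ≤ Y)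
    (hab : ∀ i, ‖a i - b i‖ ≤ D) :
    ‖∏ i, a i - ∏ i, b i‖ ≤ ∑ j ∈ Finset.range k, D * X ^ j * Y ^ (k - j - 1) := by
  induction k with
  | zero => simp
  | succ n ih =>
    set A := ∏ i : Fin n, a i.castSucc
    set B := ∏ i : Fin n, b i.castSucc
    have hAB : ‖A - B‖ ≤ ∑ j ∈ Finset.range n, D * X ^ j * Y ^ (n - j - 1) :=
      ih (fun i => ha i.castSucc) (fun i => hb i.castSucc) (fun i => hab i.castSucc)
    have hB : ‖B‖ ≤ Y ^ n := norm_prod_le_pow fun i => hb i.castSucc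
    have hsplit : ∏ i, a i - ∏ i, b i
        = (A - B) * a (Fin.last n) + B * (a (Fin.last n) - b (Fin.last n)) := by
      rw [Fin.prod_univ_castSucc, Fin.prod_univ_castSucc]; ring
    calc ‖∏ i, a i - ∏ i, b i‖
        ≤ ‖A - B‖ * ‖a (Fin.last n)‖ + ‖B‖ * ‖a (Fin.last n) - b (Fin.last n)‖ := by
          rw [hsplit]
          exact (norm_add_le _ _).trans (add_le_add (norm_mul_le _ _) (norm_mul_le _ _))
      _ ≤ (∑ j ∈ Finset.range n, D * X ^ j * Y ^ (n - j - 1)) * X + Y ^ n * D := by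
          gcongr
          exacts [(norm_nonneg _).trans hAB, ha _,
            pow_nonneg ((norm_nonneg _).trans (hb 0)) n, hab _]
      _ = ∑ j ∈ Finset.range (n + 1), D * X ^ j * Y ^ (n + 1 - j - 1) := by
          rw [Finset.sum_range_succ', Finset.sum_mul]
          congr 1
          · refine Finset.sum_congr rfl fun j hj => ?_
            rw [show n + 1 - (j + 1) - 1 = n - j - 1 by omega]; ring
          · simp [mul_comm]

theorem memLp_of_integrable_norm_pow {Ω F : Type*} [MeasurableSpace Ω] {μ : Measure Ω}
    [NormedAddCommGroup F] {k : ℕ} (hk : k ≠ 0) {f : Ω → F} (hf : AEStronglyMeasurable f μ)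
    (hfk : Integrable (fun ω => ‖f ω‖ ^ k) μ) : MemLp f k μ :=
  (integrable_norm_rpow_iff hf (by simpa using hk) (by simp)).1 (by simpa using hfk)

theorem MeasureTheory.MemLp.toReal_eLpNorm_natCast {Ω F : Type*} [MeasurableSpace Ω] {μ : Measure Ω}
    [NormedAddCommGroup F] {k : ℕ} (hk : k ≠ 0) {f : Ω → F} (hf : MemLp f k μ) :
    (eLpNorm f k μ).toReal = (∫ ω, ‖f ω‖ ^ k ∂μ) ^ (1 / (k : ℝ)) := by
  rw [hf.eLpNorm_eq_integral_rpow_norm (by simpa using hk) (by simp),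
    ENNReal.toReal_ofReal (by positivity)]
  simp

theorem lintegral_enorm_mul_pow_mul_pow_le {Ω F G H : Type*} [MeasurableSpace Ω] {μ : Measure Ω}
    [NormedAddCommGroup F] [NormedAddCommGroup G] [NormedAddCommGroup H]
    {f : Ω → F} {g : Ω → G} {h : Ω → H} (hf : AEStronglyMeasurable f μ)
    (hg : AEStronglyMeasurable g μ) (hh : AEStronglyMeasurable h μ) {j m k : ℕ}
    (hk : 1 + j + m = k) :
    ∫⁻ ω, ‖f ω‖ₑ * ‖g ω‖ₑ ^ j * ‖h ω‖ₑ ^ m ∂μ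
      ≤ eLpNorm f k μ * eLpNorm g k μ ^ j * eLpNorm h k μ ^ m := by
  have hk0 : (k : ℝ) ≠ 0 := by norm_cast; omega
  have hpow : ∀ (x : ℝ≥0∞) (n : ℕ), (x ^ (k : ℝ)) ^ ((n : ℝ) / k) = x ^ n := fun x n => by
    rw [← ENNReal.rpow_mul, mul_div_cancel₀ _ hk0, ENNReal.rpow_natCast]
  have holder := ENNReal.lintegral_prod_norm_pow_le (μ := μ) Finset.univ
    (f := ![fun ω => ‖f ω‖ₑ ^ (k : ℝ), fun ω => ‖g ω‖ₑ ^ (k : ℝ), fun ω => ‖h ω‖ₑ ^ (k : ℝ)])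
    (p := ![(1 : ℕ) / k, j / k, m / k]) (by intro i _; fin_cases i <;> simp <;> fun_prop)
    (by simp [Fin.sum_univ_three]; field_simp; exact_mod_cast hk)
    (by intro i _; fin_cases i <;> simp <;> positivity)
  simp only [Fin.prod_univ_three, Matrix.cons_val, hpow, pow_one] at holder
  simpa [eLpNorm_eq_lintegral_rpow_enorm_toReal (p := k) (by simp; omega) (by simp),
    ← ENNReal.rpow_natCast, ← ENNReal.rpow_mul, inv_mul_eq_div] using holder

theorem enorm_prod_apply_sub_prod_apply_le {k : ℕ} {f : Fin k → E →L[ℝ] ℝ}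
    (hf : ∀ i, ‖f i‖ ≤ 1) (x y : E) :
    ‖∏ i, f i x - ∏ i, f i y‖ₑ
      ≤ ∑ j ∈ Finset.range k, ‖x - y‖ₑ * ‖x‖ₑ ^ j * ‖y‖ₑ ^ (k - j - 1) := by
  have hle : ∀ i z, ‖f i z‖ ≤ ‖z‖ := fun i z => by simpa using (f i).le_of_opNorm_le (hf i) z
  have h := norm_prod_sub_prod_le (fun i => hle i x) (fun i => hle i y)
    (fun i => by simpa only [map_sub] using hle i (x - y))
  have h' : ‖∏ i, f i x - ∏ i, f i y‖₊
      ≤ ∑ j ∈ Finset.range k, ‖x - y‖₊ * ‖x‖₊ ^ j * ‖y‖₊ ^ (k - j - 1) := by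
    rw [← NNReal.coe_le_coe]; push_cast; exact h
  simp only [enorm_eq_nnnorm]
  exact_mod_cast h'

theorem integrable_prod_apply_of_memLp {Ω : Type*} [MeasurableSpace Ω] {μ : Measure Ω} {k : ℕ}
    (hk : k ≠ 0) {f : Fin k → E →L[ℝ] ℝ} (hf : ∀ i, ‖f i‖ ≤ 1) {η : Ω → E} (hη : MemLp η k μ) :
    Integrable (fun ω => ∏ i, f i (η ω)) μ := by
  refine (hη.integrable_norm_pow hk).mono' ?_ (.of_forall fun ω => norm_prod_le_pow fun i => ?_)
  · exact Finset.aestronglyMeasurable_fun_prod _ fun i _ =>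
      (f i).continuous.comp_aestronglyMeasurable hη.1
  · simpa using (f i).le_of_opNorm_le (hf i) (η ω)

theorem abs_integral_prod_apply_sub_le {Ω : Type*} [MeasurableSpace Ω] {μ : Measure Ω} {k : ℕ}
    (hk : k ≠ 0) {f : Fin k → E →L[ℝ] ℝ} (hf : ∀ i, ‖f i‖ ≤ 1) {η ξ : Ω → E}
    (hη : MemLp η k μ) (hξ : MemLp ξ k μ) :
    |∫ ω, ∏ i, f i (η ω) ∂μ - ∫ ω, ∏ i, f i (ξ ω) ∂μ|
      ≤ ∑ j ∈ Finset.range k, (eLpNorm (η - ξ) k μ).toReal * (eLpNorm η k μ).toReal ^ j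
          * (eLpNorm ξ k μ).toReal ^ (k - j - 1) := by
  have hd_fin := (hη.sub hξ).eLpNorm_ne_top
  have hη_fin := hη.eLpNorm_ne_top
  have hξ_fin := hξ.eLpNorm_ne_top
  simp only [← ENNReal.toReal_pow, ← ENNReal.toReal_mul]
  rw [← ENNReal.toReal_sum fun j _ => by finiteness,
    ← integral_sub (integrable_prod_apply_of_memLp hk hf hη)
      (integrable_prod_apply_of_memLp hk hf hξ),
    ← Real.norm_eq_abs]
  refine (norm_integral_le_lintegral_norm _).trans
    (ENNReal.toReal_mono (ENNReal.sum_ne_top.2 fun j _ => by finiteness) ?_)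
  simp only [ofReal_norm]
  calc ∫⁻ ω, ‖∏ i, f i (η ω) - ∏ i, f i (ξ ω)‖ₑ ∂μ
      ≤ ∫⁻ ω, ∑ j ∈ Finset.range k,
          ‖η ω - ξ ω‖ₑ * ‖η ω‖ₑ ^ j * ‖ξ ω‖ₑ ^ (k - j - 1) ∂μ :=
        lintegral_mono fun ω => enorm_prod_apply_sub_prod_apply_le hf _ _
    _ = ∑ j ∈ Finset.range k, ∫⁻ ω, ‖η ω - ξ ω‖ₑ * ‖η ω‖ₑ ^ j * ‖ξ ω‖ₑ ^ (k - j - 1) ∂μ :=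
        lintegral_finsetSum' _ fun j _ =>
          ((hη.1.sub hξ.1).enorm.mul (hη.1.enorm.pow_const j)).mul (hξ.1.enorm.pow_const _)
    _ ≤ _ := Finset.sum_le_sum fun j hj =>
        lintegral_enorm_mul_pow_mul_pow_le (hη.1.sub hξ.1) hη.1 hξ.1
          (by have := Finset.mem_range.mp hj; omega)

theorem injNorm_le {k : ℕ} {U : ⨂[ℝ] _ : Fin k, E} {C : ℝ} (hC : 0 ≤ C)
    (h : ∀ f : Fin k → (E →L[ℝ] ℝ), (∀ i, ‖f i‖ ≤ 1) → |tpair f U| ≤ C) : injNorm U ≤ C :=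
  Real.sSup_le (by rintro _ ⟨f, hf, rfl⟩; exact h f hf) hC

theorem kth_moment_difference_general
    {Ω : Type*} [MeasurableSpace Ω] (μ : Measure Ω)
    (k : ℕ) (hk : 1 ≤ k) (η ξ : Ω → E)
    (hη_meas : AEStronglyMeasurable η μ) (hξ_meas : AEStronglyMeasurable ξ μ)
    -- η, ξ ∈ L_k(Ω;E):
    (hη_Lk : Integrable (fun ω => ‖η ω‖ ^ k) μ)
    (hξ_Lk : Integrable (fun ω => ‖ξ ω‖ ^ k) μ)
    -- the injective k-th moments, characterized by their dual pairings:
    (Mη Mξ : ⨂[ℝ] _ : Fin k, E)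
    (hMη : ∀ f : Fin k → (E →L[ℝ] ℝ), tpair f Mη = ∫ ω, ∏ i, f i (η ω) ∂μ)
    (hMξ : ∀ f : Fin k → (E →L[ℝ] ℝ), tpair f Mξ = ∫ ω, ∏ i, f i (ξ ω) ∂μ) :
    injNorm (Mη - Mξ)
      ≤ (∫ ω, ‖η ω - ξ ω‖ ^ k ∂μ) ^ (1 / (k : ℝ))
        * ∑ i ∈ Finset.range k,
            ((∫ ω, ‖η ω‖ ^ k ∂μ) ^ (1 / (k : ℝ))) ^ i
              * ((∫ ω, ‖ξ ω‖ ^ k ∂μ) ^ (1 / (k : ℝ))) ^ (k - i - 1) := by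
  have hk0 : k ≠ 0 := by omega
  have hη := memLp_of_integrable_norm_pow hk0 hη_meas hη_Lk
  have hξ := memLp_of_integrable_norm_pow hk0 hξ_meas hξ_Lk
  refine injNorm_le (by positivity) fun f hf => ?_
  rw [map_sub, hMη, hMξ, Finset.mul_sum]
  refine (abs_integral_prod_apply_sub_le hk0 hf hη hξ).trans_eq
    (Finset.sum_congr rfl fun j _ => ?_)
  rw [(hη.sub hξ).toReal_eLpNorm_natCast hk0, hη.toReal_eLpNorm_natCast hk0,
    hξ.toReal_eLpNorm_natCast hk0]
  simp only [Pi.sub_apply, mul_assoc]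

/-- **Lemma (difference of injective k-th moments).**
For `η, ξ ∈ L_k(Ω;E)` with injective `k`-th moments `Mη = E[⊗^k η]`,
`Mξ = E[⊗^k ξ]` (characterized weakly, as for the Bochner integral), one has
`‖M^k_ε[η] − M^k_ε[ξ]‖_ε
   ≤ ‖η−ξ‖_{L_k(Ω;E)} Σ_{i=0}^{k−1} ‖η‖_{L_k(Ω;E)}^i ‖ξ‖_{L_k(Ω;E)}^{k−i−1}`. -/
theorem kth_moment_difference
    {Ω : Type*} [MeasurableSpace Ω] (μ : Measure Ω) [IsProbabilityMeasure μ]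
    (k : ℕ) (hk : 1 ≤ k) (η ξ : Ω → E)
    (hη_meas : AEStronglyMeasurable η μ) (hξ_meas : AEStronglyMeasurable ξ μ)
    -- η, ξ ∈ L_k(Ω;E):
    (hη_Lk : Integrable (fun ω => ‖η ω‖ ^ k) μ)
    (hξ_Lk : Integrable (fun ω => ‖ξ ω‖ ^ k) μ)
    -- the injective k-th moments, characterized by their dual pairings:
    (Mη Mξ : ⨂[ℝ] _ : Fin k, E)
    (hMη : ∀ f : Fin k → (E →L[ℝ] ℝ), tpair f Mη = ∫ ω, ∏ i, f i (η ω) ∂μ)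
    (hMξ : ∀ f : Fin k → (E →L[ℝ] ℝ), tpair f Mξ = ∫ ω, ∏ i, f i (ξ ω) ∂μ) :
    injNorm (Mη - Mξ)
      ≤ (∫ ω, ‖η ω - ξ ω‖ ^ k ∂μ) ^ (1 / (k : ℝ))
        * ∑ i ∈ Finset.range k,
            ((∫ ω, ‖η ω‖ ^ k ∂μ) ^ (1 / (k : ℝ))) ^ i
              * ((∫ ω, ‖ξ ω‖ ^ k ∂μ) ^ (1 / (k : ℝ))) ^ (k - i - 1) :=
  kth_moment_difference_general μ k hk η ξ hη_meas hξ_meas hη_Lk hξ_Lk Mη Mξ hMη hMξ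
end

section
/- Let H be a real separable Hilbert space with orthonormal vectors e_1,…,e_n, and λ_1,…,λ_n ∈ ℝ. Then the projective tensor norm of U = Σ_{j=1}^n λ_j e_j ⊗ e_j in H ⊗ H equals Σ_{j=1}^n |λ_j|. -/
/-!
The representation `U = Σ_j (λ_j e_j) ⊗ e_j` gives `‖U‖_π ≤ Σ_j |λ_j|`. For the reverse bound,
test `U` against the functional induced by the bilinear form
`B(x, y) = Σ_j sign(λ_j) ⟪e_j, x⟫ ⟪e_j, y⟫`: by Cauchy–Schwarz and Bessel's inequality
`B(x, y) ≤ ‖x‖ ‖y‖`, so `B` is bounded by `Σ_i ‖x_i‖ ‖y_i‖` on every representation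
`U = Σ_i x_i ⊗ y_i`, while by orthonormality it takes the value `Σ_j |λ_j|` at `U`.
-/

open BigOperators
open scoped TensorProduct

variable {H : Type*} [NormedAddCommGroup H] [InnerProductSpace ℝ H]

/-- projective tensor norm on the algebraic tensor product `H ⊗ H` -/
noncomputable def projNorm (U : H ⊗[ℝ] H) : ℝ :=
  sInf {r | ∃ (m : ℕ) (x y : Fin m → H),
    U = ∑ i, x i ⊗ₜ[ℝ] y i ∧ r = ∑ i, ‖x i‖ * ‖y i‖}

open scoped RealInnerProductSpace

lemma projNorm_le_sum {m : ℕ} (x y : Fin m → H) :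
    projNorm (∑ i, x i ⊗ₜ[ℝ] y i) ≤ ∑ i, ‖x i‖ * ‖y i‖ := by
  refine csInf_le ⟨0, ?_⟩ ⟨m, x, y, rfl, rfl⟩
  rintro r ⟨k, x', y', -, rfl⟩
  positivity

lemma lift_le_projNorm (B : H →ₗ[ℝ] H →ₗ[ℝ] ℝ) (hB : ∀ x y, B x y ≤ ‖x‖ * ‖y‖)
    (U : H ⊗[ℝ] H) : TensorProduct.lift B U ≤ projNorm U := by
  obtain ⟨m, x, y, hU⟩ := TensorProduct.exists_sum_tmul_eq U
  refine le_csInf ⟨_, m, x, y, hU, rfl⟩ ?_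
  rintro r ⟨k, x', y', rfl, rfl⟩
  simpa only [map_sum, TensorProduct.lift.tmul] using
    Finset.sum_le_sum fun i _ => hB (x' i) (y' i)

section DiagonalForm

variable {ι : Type*} [Fintype ι]

noncomputable def diagonalForm (e : ι → H) (s : ι → ℝ) : H →ₗ[ℝ] H →ₗ[ℝ] ℝ :=
  ∑ j, s j • (LinearMap.mul ℝ ℝ).compl₁₂ (innerₛₗ ℝ (e j)) (innerₛₗ ℝ (e j))

lemma diagonalForm_apply (e : ι → H) (s : ι → ℝ) (x y : H) :
    diagonalForm e s x y = ∑ j, s j * (⟪e j, x⟫ * ⟪e j, y⟫) := by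
  simp [diagonalForm]

lemma Orthonormal.sum_abs_inner_mul_abs_inner_le {e : ι → H} (he : Orthonormal ℝ e) (x y : H) :
    ∑ j, |⟪e j, x⟫| * |⟪e j, y⟫| ≤ ‖x‖ * ‖y‖ := by
  have bessel : ∀ z : H, √(∑ j, |⟪e j, z⟫| ^ 2) ≤ ‖z‖ := fun z =>
    (Real.sqrt_le_left (norm_nonneg z)).mpr <| by
      simpa using he.sum_inner_products_le (s := Finset.univ) z
  calc ∑ j, |⟪e j, x⟫| * |⟪e j, y⟫|
      ≤ √(∑ j, |⟪e j, x⟫| ^ 2) * √(∑ j, |⟪e j, y⟫| ^ 2) := Real.sum_mul_le_sqrt_mul_sqrt _ _ _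
    _ ≤ ‖x‖ * ‖y‖ := mul_le_mul (bessel x) (bessel y) (Real.sqrt_nonneg _) (norm_nonneg x)

lemma Orthonormal.diagonalForm_le {e : ι → H} (he : Orthonormal ℝ e) {s : ι → ℝ}
    (hs : ∀ j, |s j| ≤ 1) (x y : H) : diagonalForm e s x y ≤ ‖x‖ * ‖y‖ := by
  refine le_trans ?_ (he.sum_abs_inner_mul_abs_inner_le x y)
  rw [diagonalForm_apply]
  refine Finset.sum_le_sum fun j _ => ?_
  calc s j * (⟪e j, x⟫ * ⟪e j, y⟫)
      ≤ |s j| * (|⟪e j, x⟫| * |⟪e j, y⟫|) := by rw [← abs_mul, ← abs_mul]; exact le_abs_self _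
    _ ≤ |⟪e j, x⟫| * |⟪e j, y⟫| := mul_le_of_le_one_left (by positivity) (hs j)

lemma Orthonormal.lift_diagonalForm_sum_smul_tmul {e : ι → H} (he : Orthonormal ℝ e)
    (s lam : ι → ℝ) :
    TensorProduct.lift (diagonalForm e s) (∑ j, lam j • (e j ⊗ₜ[ℝ] e j)) = ∑ j, s j * lam j := by
  classical
  simp [diagonalForm_apply, orthonormal_iff_ite.mp he, mul_comm]

end DiagonalForm

lemma abs_sign_le_one (r : ℝ) : |(SignType.sign r : ℝ)| ≤ 1 := by
  cases SignType.sign r <;> simp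

theorem projNorm_diagonal_general
    (n : ℕ) (e : Fin n → H) (he : Orthonormal ℝ e) (lam : Fin n → ℝ) :
    projNorm (∑ j, lam j • (e j ⊗ₜ[ℝ] e j)) = ∑ j, |lam j| := by
  refine le_antisymm ?_ ?_
  · have hU : ∑ j, lam j • (e j ⊗ₜ[ℝ] e j) = ∑ j, (lam j • e j) ⊗ₜ[ℝ] e j := by
      simp only [TensorProduct.smul_tmul']
    simpa [hU, norm_smul, he.1] using projNorm_le_sum (fun j => lam j • e j) e
  · let B := diagonalForm e fun j => (SignType.sign (lam j) : ℝ)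
    calc ∑ j, |lam j| = TensorProduct.lift B (∑ j, lam j • (e j ⊗ₜ[ℝ] e j)) := by
          simp [B, he.lift_diagonalForm_sum_smul_tmul]
      _ ≤ _ := lift_le_projNorm B (he.diagonalForm_le fun j => abs_sign_le_one _) _

/-- **Projective norm of a diagonal element.**
For orthonormal `e₁,…,e_n` in a real separable Hilbert space `H` and reals `λ_j`,
`‖Σ_j λ_j e_j ⊗ e_j‖_π = Σ_j |λ_j|`. -/
theorem projNorm_diagonal
    [CompleteSpace H] [TopologicalSpace.SeparableSpace H]
    (n : ℕ) (e : Fin n → H) (he : Orthonormal ℝ e) (lam : Fin n → ℝ) :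
    projNorm (∑ j, lam j • (e j ⊗ₜ[ℝ] e j)) = ∑ j, |lam j| :=
  projNorm_diagonal_general n e he lam
end

section
/- Let I = (0,b), p ∈ (1,∞), and let a ∈ L_∞(I) satisfy 0 < a_min ≤ a(x) ≤ a_max < ∞ a.e. Let B_a(w,v) := ∫_0^b a(x) w'(x) v'(x) dx on the spaces Ẇ¹_{p,{0}}(I) × Ẇ¹_{p',{0}}(I) of W¹_p- resp. W¹_{p'}-functions vanishing at 0, normed by the L_p- resp. L_{p'}-norm of the derivative. Then the inf-sup condition holds: inf_{0 ≠ w} sup_{0 ≠ v} B_a(w,v)/(|w|_{W¹_p} |v|_{W¹_{p'}}) ≥ a_min, where for given w the supremum is attained (up to the constant) by the test function v_w(x) := ∫_0^x sign(w'(t)) |w'(t)|^{p−1} dt. -/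
/-!
Testing `w` against the function `v_w` with `v_w' = sign(w') |w'|^{p-1}` turns the bilinear form into
the weighted integral `∫ a |w'|^p ≥ a_min ‖w'‖_p^p`, while `|v_w'|^{p'} = |w'|^p` pointwise because
`(p - 1) p' = p`. Hence `‖v_w'‖_{p'} = ‖w'‖_p^{p-1}`, and since `1/p + 1/p' = 1` the product
`‖w'‖_p ‖v_w'‖_{p'}` equals `‖w'‖_p^p`, which gives the inf-sup bound with constant `a_min`.
-/

open MeasureTheory

/-- The derivative of the test function `v_w`, evaluated at `x = w'(t)`. -/
noncomputable def dualityMap (p x : ℝ) : ℝ := Real.sign x * |x| ^ (p - 1)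

lemma Real.measurable_sign : Measurable Real.sign :=
  Measurable.ite measurableSet_Iio measurable_const
    (Measurable.ite measurableSet_Ioi measurable_const measurable_const)

lemma measurable_dualityMap (p : ℝ) : Measurable (dualityMap p) :=
  Real.measurable_sign.mul (by fun_prop)

lemma abs_dualityMap {p : ℝ} (hp : 1 < p) (x : ℝ) : |dualityMap p x| = |x| ^ (p - 1) := by
  rcases eq_or_ne x 0 with rfl | hx
  · simp [dualityMap, Real.zero_rpow (sub_ne_zero.2 hp.ne')]
  · have hsign : |Real.sign x| = 1 := by
      rcases Real.sign_apply_eq_of_ne_zero x hx with h | h <;> simp [h]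
    rw [dualityMap, abs_mul, hsign, one_mul, abs_of_nonneg (by positivity)]

lemma mul_dualityMap {p : ℝ} (hp : p ≠ 0) (x : ℝ) : x * dualityMap p x = |x| ^ p := by
  have hx : x * Real.sign x = |x| := by
    rcases lt_trichotomy x 0 with h | rfl | h
    · rw [Real.sign_of_neg h, abs_of_neg h, mul_neg_one]
    · simp
    · rw [Real.sign_of_pos h, abs_of_pos h, mul_one]
  calc x * dualityMap p x = |x| ^ (p - 1) * |x| := by rw [dualityMap, ← mul_assoc, hx, mul_comm]
    _ = |x| ^ p := by rw [← Real.rpow_add_one' (abs_nonneg x) (by simpa using hp), sub_add_cancel]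

lemma abs_dualityMap_rpow {p q : ℝ} (hpq : p.HolderConjugate q) (x : ℝ) :
    |dualityMap p x| ^ q = |x| ^ p := by
  rw [abs_dualityMap hpq.lt, ← Real.rpow_mul (abs_nonneg x), hpq.sub_one_mul_conj]

namespace Real.HolderConjugate

variable {p q : ℝ}

lemma rpow_one_div_mul_rpow_one_div (hpq : p.HolderConjugate q) {S : ℝ} (hS : 0 ≤ S) :
    S ^ (1 / p) * S ^ (1 / q) = S := by
  have h : 1 / p + 1 / q = 1 := by simpa only [one_div] using hpq.inv_add_inv_eq_one
  rw [← Real.rpow_add' hS (by rw [h]; exact one_ne_zero), h, Real.rpow_one]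

lemma rpow_one_div_conj (hpq : p.HolderConjugate q) {S : ℝ} (hS : 0 ≤ S) :
    S ^ (1 / q) = (S ^ (1 / p)) ^ (p - 1) := by
  rw [← Real.rpow_mul hS]
  congr 1
  have h : 1 / q = 1 - 1 / p := by
    simpa only [one_div, eq_sub_iff_add_eq, add_comm] using hpq.inv_add_inv_eq_one
  field_simp [hpq.ne_zero] at h ⊢
  linarith

end Real.HolderConjugate

section Integrals

variable {α : Type*} [MeasurableSpace α] {μ : Measure α}

lemma const_mul_integral_le_integral_mul {c C : ℝ} {a f : α → ℝ} (hf : Integrable f μ)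
    (hf0 : 0 ≤ᵐ[μ] f) (ha : AEStronglyMeasurable a μ) (hbdd : ∀ᵐ t ∂μ, c ≤ a t ∧ a t ≤ C) :
    c * ∫ t, f t ∂μ ≤ ∫ t, a t * f t ∂μ := by
  have haf : Integrable (fun t => a t * f t) μ :=
    hf.bdd_mul ha (c := max |c| |C|) <| by
      filter_upwards [hbdd] with t ⟨hc, hC⟩ using abs_le_max_abs_abs hc hC
  rw [← integral_const_mul]
  refine integral_mono_ae (hf.const_mul c) haf ?_
  filter_upwards [hbdd, hf0] with t ⟨hc, _⟩ hft using mul_le_mul_of_nonneg_right hc hft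

variable {p q : ℝ}

lemma integral_abs_dualityMap_rpow (hpq : p.HolderConjugate q) (g : α → ℝ) :
    ∫ t, |dualityMap p (g t)| ^ q ∂μ = ∫ t, |g t| ^ p ∂μ := by
  simp only [abs_dualityMap_rpow hpq]

lemma integral_abs_dualityMap_rpow_one_div (hpq : p.HolderConjugate q) (g : α → ℝ) :
    (∫ t, |dualityMap p (g t)| ^ q ∂μ) ^ (1 / q) = ((∫ t, |g t| ^ p ∂μ) ^ (1 / p)) ^ (p - 1) := by
  rw [integral_abs_dualityMap_rpow hpq,
    hpq.rpow_one_div_conj (integral_nonneg fun t => by positivity)]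

lemma const_mul_norm_mul_norm_dualityMap_le (hpq : p.HolderConjugate q) {c C : ℝ} {a g : α → ℝ}
    (hg : Integrable (fun t => |g t| ^ p) μ) (ha : AEStronglyMeasurable a μ)
    (hbdd : ∀ᵐ t ∂μ, c ≤ a t ∧ a t ≤ C) :
    c * (∫ t, |g t| ^ p ∂μ) ^ (1 / p) * (∫ t, |dualityMap p (g t)| ^ q ∂μ) ^ (1 / q)
      ≤ ∫ t, a t * g t * dualityMap p (g t) ∂μ := by
  have hS : 0 ≤ ∫ t, |g t| ^ p ∂μ := integral_nonneg fun t => by positivity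
  calc c * (∫ t, |g t| ^ p ∂μ) ^ (1 / p) * (∫ t, |dualityMap p (g t)| ^ q ∂μ) ^ (1 / q)
        = c * ∫ t, |g t| ^ p ∂μ := by
          rw [integral_abs_dualityMap_rpow hpq, mul_assoc, hpq.rpow_one_div_mul_rpow_one_div hS]
    _ ≤ ∫ t, a t * |g t| ^ p ∂μ :=
          const_mul_integral_le_integral_mul hg (ae_of_all _ fun t => by positivity) ha hbdd
    _ = ∫ t, a t * g t * dualityMap p (g t) ∂μ := by
          simp only [mul_assoc, mul_dualityMap hpq.ne_zero]

end Integrals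

theorem one_d_inf_sup_general
    (b : ℝ) (p p' : ℝ) (hpq : p.HolderConjugate p')
    (a : ℝ → ℝ) (ha_meas : Measurable a)
    (amin amax : ℝ)
    (ha_bdd : ∀ᵐ t ∂(volume.restrict (Set.Ioo 0 b)), amin ≤ a t ∧ a t ≤ amax) :
    -- (i) & (ii): the explicit test function attains the inf-sup bound:
    (∀ g : ℝ → ℝ, Measurable g →
      Integrable (fun t => |g t| ^ p) (volume.restrict (Set.Ioo 0 b)) →
      (∫ t in Set.Ioo 0 b, |Real.sign (g t) * |g t| ^ (p - 1)| ^ p') ^ (1/p')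
          = ((∫ t in Set.Ioo 0 b, |g t| ^ p) ^ (1/p)) ^ (p - 1) ∧
        amin * (∫ t in Set.Ioo 0 b, |g t| ^ p) ^ (1/p)
            * (∫ t in Set.Ioo 0 b, |Real.sign (g t) * |g t| ^ (p - 1)| ^ p') ^ (1/p')
          ≤ ∫ t in Set.Ioo 0 b, a t * g t * (Real.sign (g t) * |g t| ^ (p - 1))) ∧
    -- (iii): the inf-sup condition with constant `a_min`:
    (∀ g : ℝ → ℝ, Measurable g →
      Integrable (fun t => |g t| ^ p) (volume.restrict (Set.Ioo 0 b)) →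
      0 < ∫ t in Set.Ioo 0 b, |g t| ^ p →
      ∃ h : ℝ → ℝ, Measurable h ∧
        Integrable (fun t => |h t| ^ p') (volume.restrict (Set.Ioo 0 b)) ∧
        0 < ∫ t in Set.Ioo 0 b, |h t| ^ p' ∧
        amin * (∫ t in Set.Ioo 0 b, |g t| ^ p) ^ (1/p)
            * (∫ t in Set.Ioo 0 b, |h t| ^ p') ^ (1/p')
          ≤ ∫ t in Set.Ioo 0 b, a t * g t * h t) := by
  have inf_sup_bound := fun (g : ℝ → ℝ) (hg : Integrable (fun t => |g t| ^ p) _) =>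
    const_mul_norm_mul_norm_dualityMap_le hpq hg ha_meas.aestronglyMeasurable ha_bdd
  refine ⟨fun g _ hg => ⟨integral_abs_dualityMap_rpow_one_div hpq g, inf_sup_bound g hg⟩,
    fun g hg_meas hg hg_pos => ⟨fun t => dualityMap p (g t), ?_, ?_, ?_, inf_sup_bound g hg⟩⟩
  · exact (measurable_dualityMap p).comp hg_meas
  · simpa only [abs_dualityMap_rpow hpq] using hg
  · rwa [integral_abs_dualityMap_rpow hpq]

/-- **Inf-sup condition for the 1D diffusion bilinear form.**
Identify `Ẇ¹_{p,{0}}(0,b)` with `L_p(0,b)` via `w ↦ w'` (so that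
`|w|_{W¹_p} = ‖w'‖_{L_p}` and `B_a(w,v) = ∫ a w' v'`). For `0 < a_min ≤ a ≤ a_max`
a.e. and conjugate exponents `p, p'`, the explicit test function
`v_w' = h_g := sign(g) |g|^{p−1}` (for `g = w'`) satisfies
`‖h_g‖_{L_{p'}} = ‖g‖_{L_p}^{p−1}` and `B_a(w, v_w) ≥ a_min ‖g‖_{L_p} ‖h_g‖_{L_{p'}}`,
whence the inf-sup condition with constant `a_min` holds. -/
theorem one_d_inf_sup
    (b : ℝ) (hb : 0 < b) (p p' : ℝ) (hpq : p.HolderConjugate p')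
    (a : ℝ → ℝ) (ha_meas : Measurable a)
    (amin amax : ℝ) (h0 : 0 < amin) (hminmax : amin ≤ amax)
    (ha_bdd : ∀ᵐ t ∂(volume.restrict (Set.Ioo 0 b)), amin ≤ a t ∧ a t ≤ amax) :
    -- (i) & (ii): the explicit test function attains the inf-sup bound:
    (∀ g : ℝ → ℝ, Measurable g →
      Integrable (fun t => |g t| ^ p) (volume.restrict (Set.Ioo 0 b)) →
      (∫ t in Set.Ioo 0 b, |Real.sign (g t) * |g t| ^ (p - 1)| ^ p') ^ (1/p')
          = ((∫ t in Set.Ioo 0 b, |g t| ^ p) ^ (1/p)) ^ (p - 1) ∧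
        amin * (∫ t in Set.Ioo 0 b, |g t| ^ p) ^ (1/p)
            * (∫ t in Set.Ioo 0 b, |Real.sign (g t) * |g t| ^ (p - 1)| ^ p') ^ (1/p')
          ≤ ∫ t in Set.Ioo 0 b, a t * g t * (Real.sign (g t) * |g t| ^ (p - 1))) ∧
    -- (iii): the inf-sup condition with constant `a_min`:
    (∀ g : ℝ → ℝ, Measurable g →
      Integrable (fun t => |g t| ^ p) (volume.restrict (Set.Ioo 0 b)) →
      0 < ∫ t in Set.Ioo 0 b, |g t| ^ p →
      ∃ h : ℝ → ℝ, Measurable h ∧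
        Integrable (fun t => |h t| ^ p') (volume.restrict (Set.Ioo 0 b)) ∧
        0 < ∫ t in Set.Ioo 0 b, |h t| ^ p' ∧
        amin * (∫ t in Set.Ioo 0 b, |g t| ^ p) ^ (1/p)
            * (∫ t in Set.Ioo 0 b, |h t| ^ p') ^ (1/p')
          ≤ ∫ t in Set.Ioo 0 b, a t * g t * h t) :=
  one_d_inf_sup_general b p p' hpq a ha_meas amin amax ha_bdd
end
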